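/- Let α > 1, t > 0, p ∈ [0,1] and x ∈ ℝ, x ≠ 0. Define the asymmetric Fresnel pseudo-density u_{2α,p}(x,t) = (1/((α t)^{1/α})) · [ p · Ai_α(−x/(α t)^{1/α}) + (1−p) · Ai_α(x/(α t)^{1/α}) ]. Then u_{2α,p}(x,t) = (α t/(π x)) · ∫_0^∞ e^{-t y^α} y^{α-1} sin(x y cos(π/(2α))) · ( p e^{x y sin(π/(2α))} + (1−p) e^{−x y sin(π/(2α))} ) dy. -/

import Mathlib

open Real MeasureTheory Set

noncomputable def genAiry (α x : ℝ) : ℝ :=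
  (1 / (π * α ^ ((α - 1) / α))) *
    ∑' k : ℕ, (α ^ ((k : ℝ) / α) * x ^ k / k.factorial) *
      Real.Gamma ((k + 1) / α) * Real.sin (π * (k + 1) * (α + 1) / (2 * α))

/-!
Write `θ = π / (2α)`. Since `sin (a cos ψ) e^{a sin ψ} = Im exp (a e^{i(π/2 - ψ)})`, the factor
`sin (x y cos θ) (p e^{x y sin θ} + (1 - p) e^{-x y sin θ})` is a power series in `x y` with
bounded coefficients `p sin (k (π/2 - θ)) + (1 - p) sin (k (π/2 + θ))`. Integrating it termwise
against `e^{-t y^α} y^{α-1}` is legitimate because `C^k Γ((k + α)/α) / k!` is summable for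
`α > 1` (ratio test, via log-convexity of `Γ`), and produces the moments
`t^{-(k+α)/α} Γ((k+α)/α) / α`. The `k = 0` term vanishes; after the shift `k = j + 1`, the
relation `Γ(s + 1) = s Γ(s)` and the parity `sin ((j+1)(π/2 - θ)) = (-1)^j sin ((j+1)(π/2 + θ))`,
the result is the Airy series of `p Ai_α(-x/(αt)^{1/α}) + (1 - p) Ai_α(x/(αt)^{1/α})`, term by
term.
-/
open Filter
open scoped Nat

theorem hasSum_sin_mul_cos_mul_exp_mul_sin (a ψ : ℝ) :
    HasSum (fun k : ℕ => a ^ k / k ! * sin (k * (π / 2 - ψ)))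
      (sin (a * cos ψ) * exp (a * sin ψ)) := by
  set z : ℂ := a * Complex.exp ((π / 2 - ψ : ℝ) * Complex.I)
  have hre : z.re = a * sin ψ := by
    simp only [z, Complex.re_ofReal_mul, Complex.exp_ofReal_mul_I_re, cos_pi_div_two_sub]
  have him : z.im = a * cos ψ := by
    simp only [z, Complex.im_ofReal_mul, Complex.exp_ofReal_mul_I_im, sin_pi_div_two_sub]
  have hterm (k : ℕ) : (z ^ k / k !).im = a ^ k / k ! * sin (k * (π / 2 - ψ)) := by
    rw [mul_pow, ← Complex.exp_nat_mul, ← mul_assoc, ← Complex.ofReal_natCast,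
      ← Complex.ofReal_mul, ← Complex.ofReal_pow, Complex.div_natCast_im,
      Complex.im_ofReal_mul, Complex.exp_ofReal_mul_I_im]
    ring
  have h := Complex.hasSum_im (NormedSpace.expSeries_div_hasSum_exp z)
  rw [← Complex.exp_eq_exp_ℂ, Complex.exp_im, hre, him] at h
  simpa only [hterm, mul_comm (exp _)] using h

theorem sin_succ_mul_pi_div_two_sub (θ : ℝ) (j : ℕ) :
    sin ((j + 1 : ℝ) * (π / 2 - θ)) = (-1) ^ j * sin ((j + 1 : ℝ) * (π / 2 + θ)) := by
  have h := sin_nat_mul_pi_sub ((j + 1 : ℝ) * (π / 2 + θ)) (j + 1)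
  rw [pow_succ] at h
  push_cast at h
  rw [show (j + 1 : ℝ) * (π / 2 - θ) = (j + 1) * π - (j + 1) * (π / 2 + θ) by ring, h]
  ring

theorem Gamma_add_le_mul_rpow {s δ : ℝ} (hs : 0 < s) (hδ0 : 0 < δ) (hδ1 : δ < 1) :
    Gamma (s + δ) ≤ Gamma s * s ^ δ := by
  have hΓ : 0 < Gamma s := Gamma_pos_of_pos hs
  have h := Gamma_mul_add_mul_le_rpow_Gamma_mul_rpow_Gamma hs (by linarith : 0 < s + 1)
    (by linarith : 0 < 1 - δ) hδ0 (by ring)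
  rwa [show (1 - δ) * s + δ * (s + 1) = s + δ by ring, Gamma_add_one hs.ne',
    mul_rpow hs.le hΓ.le, mul_left_comm, mul_comm (s ^ δ), ← rpow_add hΓ, sub_add_cancel,
    rpow_one] at h

theorem summable_pow_div_factorial_mul_Gamma {α a : ℝ} (hα : 1 < α) (ha : 0 < a) (C : ℝ) :
    Summable fun k : ℕ => C ^ k / k ! * Gamma ((k + a) / α) := by
  have hα0 : 0 < α := by linarith
  set f : ℕ → ℝ := fun k => C ^ k / k ! * Gamma ((k + a) / α)
  set K := |C| * (a + 1) ^ (1 / α) with hK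
  have hratio (k : ℕ) : ‖f (k + 1)‖ ≤ K * ((k : ℝ) + 1) ^ (1 / α - 1) * ‖f k‖ := by
    set s := ((k : ℝ) + a) / α
    have hs : 0 < s := by positivity
    have hk : (0 : ℝ) < k + 1 := by positivity
    have hstep : (((k + 1 : ℕ) : ℝ) + a) / α = s + 1 / α := by push_cast; ring
    have hsle : s ≤ (a + 1) * ((k : ℝ) + 1) := by
      rw [div_le_iff₀ hα0]
      nlinarith [mul_le_mul_of_nonneg_left hα.le (by positivity : 0 ≤ (a + 1) * ((k : ℝ) + 1))]
    -- log-convexity of `Gamma` makes the step `s ↦ s + 1/α` cost only a factor `s ^ (1/α)`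
    have hGamma : Gamma (s + 1 / α) ≤
        Gamma s * ((a + 1) ^ (1 / α) * (((k : ℝ) + 1) ^ (1 / α - 1) * ((k : ℝ) + 1))) := by
      rw [rpow_sub_one hk.ne', div_mul_cancel₀ _ hk.ne', ← mul_rpow (by linarith) hk.le]
      refine (Gamma_add_le_mul_rpow hs (by positivity) ((div_lt_one hα0).2 hα)).trans ?_
      gcongr
    simp only [f, norm_mul, norm_div, norm_pow, Real.norm_eq_abs, Nat.abs_cast,
      abs_of_pos (Gamma_pos_of_pos (by positivity : 0 < s + 1 / α)), hstep, Nat.factorial_succ,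
      pow_succ]
    rw [abs_of_pos (Gamma_pos_of_pos hs)]
    calc |C| ^ k * |C| / ((k + 1 : ℕ) * k ! : ℕ) * Gamma (s + 1 / α)
        ≤ |C| ^ k * |C| / ((k + 1 : ℕ) * k ! : ℕ) *
          (Gamma s * ((a + 1) ^ (1 / α) * (((k : ℝ) + 1) ^ (1 / α - 1) * ((k : ℝ) + 1)))) := by
          gcongr
      _ = K * ((k : ℝ) + 1) ^ (1 / α - 1) * (|C| ^ k / k ! * Gamma s) := by
          push_cast
          field_simp
          rw [hK]
          ring
  have hlim : Tendsto (fun k : ℕ => K * ((k : ℝ) + 1) ^ (1 / α - 1)) atTop (nhds 0) := by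
    have h := (tendsto_rpow_neg_atTop (by rw [sub_pos, div_lt_one hα0]; exact hα)).comp
      (tendsto_atTop_add_const_right _ 1 (tendsto_natCast_atTop_atTop (R := ℝ)))
    simpa [Function.comp_def] using h.const_mul K
  refine summable_of_ratio_norm_eventually_le (r := 1 / 2) (by norm_num) ?_
  filter_upwards [hlim.eventually_le_const (by norm_num : (0 : ℝ) < 1 / 2)] with k hk
  exact (hratio k).trans (mul_le_mul_of_nonneg_right hk (norm_nonneg _))

noncomputable def stretchedExpMoment (α t : ℝ) (k : ℕ) : ℝ :=
  t ^ (-((k : ℝ) + α) / α) * (1 / α) * Gamma (((k : ℝ) + α) / α)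

theorem eqOn_exp_neg_mul_rpow_mul_pow (α t : ℝ) (k : ℕ) :
    EqOn (fun y : ℝ => exp (-t * y ^ α) * y ^ (α - 1) * y ^ k)
      (fun y => y ^ ((k : ℝ) + α - 1) * exp (-t * y ^ α)) (Ioi 0) := by
  intro y (hy : 0 < y)
  simp only
  rw [add_sub_assoc, rpow_add hy, rpow_natCast]
  ring

section StretchedExponentialMoments

variable {α t : ℝ}

theorem integrableOn_exp_neg_mul_rpow_mul_pow (hα : 0 < α) (ht : 0 < t) (k : ℕ) :
    IntegrableOn (fun y : ℝ => exp (-t * y ^ α) * y ^ (α - 1) * y ^ k) (Ioi 0) :=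
  (integrableOn_rpow_mul_exp_neg_mul_rpow (by linarith [k.cast_nonneg (α := ℝ)]) hα ht
    ).congr_fun (eqOn_exp_neg_mul_rpow_mul_pow α t k).symm measurableSet_Ioi

theorem integral_exp_neg_mul_rpow_mul_pow (hα : 0 < α) (ht : 0 < t) (k : ℕ) :
    ∫ y in Ioi 0, exp (-t * y ^ α) * y ^ (α - 1) * y ^ k = stretchedExpMoment α t k := by
  rw [setIntegral_congr_fun measurableSet_Ioi (eqOn_exp_neg_mul_rpow_mul_pow α t k),
    integral_rpow_mul_exp_neg_mul_rpow hα (by linarith [k.cast_nonneg (α := ℝ)]) ht,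
    sub_add_cancel, stretchedExpMoment]

theorem stretchedExpMoment_nonneg (hα : 0 < α) (ht : 0 < t) (k : ℕ) :
    0 ≤ stretchedExpMoment α t k := by
  unfold stretchedExpMoment
  have := Gamma_pos_of_pos (by positivity : 0 < ((k : ℝ) + α) / α)
  positivity

theorem stretchedExpMoment_eq_mul_pow (hα : 0 < α) (ht : 0 < t) (k : ℕ) :
    stretchedExpMoment α t k = t⁻¹ / α * (t ^ (-1 / α)) ^ k * Gamma (((k : ℝ) + α) / α) := by
  have h : t ^ (-((k : ℝ) + α) / α) = t⁻¹ * (t ^ (-1 / α)) ^ k := by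
    rw [← rpow_natCast, ← rpow_mul ht.le, ← rpow_neg_one, ← rpow_add ht]
    congr 1
    field_simp
    ring
  rw [stretchedExpMoment, h]
  ring

theorem stretchedExpMoment_succ (hα : 0 < α) (ht : 0 < t) (k : ℕ) :
    stretchedExpMoment α t (k + 1) =
      (k + 1) / (α ^ 2 * t) * t ^ (-((k : ℝ) + 1) / α) * Gamma (((k : ℝ) + 1) / α) := by
  have hk : 0 < ((k : ℝ) + 1) / α := by positivity
  rw [stretchedExpMoment, show ((k + 1 : ℕ) + α) / α = ((k : ℝ) + 1) / α + 1 by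
      push_cast; field_simp, Gamma_add_one hk.ne',
    show -(((k + 1 : ℕ) : ℝ) + α) / α = -((k : ℝ) + 1) / α + -1 by push_cast; field_simp; ring,
    rpow_add ht, rpow_neg_one]
  field_simp

end StretchedExponentialMoments

theorem hasSum_integral_exp_neg_mul_rpow_mul {α t B C : ℝ} (hα : 1 < α) (ht : 0 < t)
    {c : ℕ → ℝ} (hc : ∀ k, |c k| ≤ B * C ^ k) {f : ℝ → ℝ}
    (hf : ∀ y, HasSum (fun k => c k * y ^ k / k !) (f y)) :
    HasSum (fun k => c k / k ! * stretchedExpMoment α t k)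
      (∫ y in Ioi 0, exp (-t * y ^ α) * y ^ (α - 1) * f y) := by
  have hα0 : 0 < α := by linarith
  set F : ℕ → ℝ → ℝ := fun k y => c k / k ! * (exp (-t * y ^ α) * y ^ (α - 1) * y ^ k)
  have hint (k : ℕ) : IntegrableOn (F k) (Ioi 0) :=
    (integrableOn_exp_neg_mul_rpow_mul_pow hα0 ht k).const_mul _
  have hnorm (k : ℕ) : ∫ y in Ioi 0, ‖F k y‖ = |c k| / k ! * stretchedExpMoment α t k := by
    rw [← integral_exp_neg_mul_rpow_mul_pow hα0 ht, ← integral_const_mul]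
    refine setIntegral_congr_fun measurableSet_Ioi fun y (hy : 0 < y) => ?_
    rw [Real.norm_eq_abs, abs_mul, abs_div, Nat.abs_cast,
      abs_of_nonneg (by positivity : 0 ≤ exp (-t * y ^ α) * y ^ (α - 1) * y ^ k)]
  have hsum : Summable fun k => ∫ y in Ioi 0, ‖F k y‖ := by
    refine ((summable_pow_div_factorial_mul_Gamma hα hα0 (C * t ^ (-1 / α))).mul_left
      (B * t⁻¹ / α)).of_nonneg_of_le (fun k => integral_nonneg fun y => norm_nonneg _)
      fun k => ?_
    calc ∫ y in Ioi 0, ‖F k y‖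
        ≤ B * C ^ k / k ! * stretchedExpMoment α t k := by
          rw [hnorm]
          gcongr
          · exact stretchedExpMoment_nonneg hα0 ht k
          · exact hc k
      _ = _ := by
          rw [stretchedExpMoment_eq_mul_pow hα0 ht, mul_pow]
          ring
  have hterm :
      (fun k => ∫ y in Ioi 0, F k y) = fun k => c k / k ! * stretchedExpMoment α t k := by
    ext k
    rw [integral_const_mul, integral_exp_neg_mul_rpow_mul_pow hα0 ht]
  have htsum (y : ℝ) : ∑' k, F k y = exp (-t * y ^ α) * y ^ (α - 1) * f y := by
    rw [← ((hf y).mul_left (exp (-t * y ^ α) * y ^ (α - 1))).tsum_eq]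
    exact tsum_congr fun k => by ring
  simpa only [hterm, htsum] using hasSum_integral_of_summable_integral_norm hint hsum

noncomputable def scaledAiryCoeff (α t : ℝ) (k : ℕ) : ℝ :=
  t ^ (-((k : ℝ) + 1) / α) / (π * α) * Gamma (((k : ℝ) + 1) / α) *
    sin (π * (k + 1) * (α + 1) / (2 * α)) / k !

theorem hasSum_genAiry_div {α t : ℝ} (hα : 1 < α) (ht : 0 < t) (z : ℝ) :
    HasSum (fun k : ℕ => z ^ k * scaledAiryCoeff α t k)
      (1 / (α * t) ^ (1 / α) * genAiry α (z / (α * t) ^ (1 / α))) := by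
  have hα0 : 0 < α := by linarith
  set T := (α * t) ^ (1 / α) with hT
  have hαpow (k : ℕ) : (α ^ (1 / α)) ^ k = α ^ ((k : ℝ) / α) := by
    rw [← rpow_natCast, ← rpow_mul hα0.le, one_div_mul_eq_div]
  have hsum : Summable fun k : ℕ => α ^ ((k : ℝ) / α) * (z / T) ^ k / k ! *
      Gamma ((k + 1) / α) * sin (π * (k + 1) * (α + 1) / (2 * α)) := by
    refine (summable_pow_div_factorial_mul_Gamma hα one_pos (α ^ (1 / α) * (z / T))).abs
      |>.of_norm_bounded fun k => ?_
    rw [Real.norm_eq_abs, abs_mul _ (sin _), mul_pow, hαpow]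
    exact mul_le_of_le_one_right (abs_nonneg _) (abs_sin_le_one _)
  have hTpow (k : ℕ) :
      T * T ^ k = α ^ ((k : ℝ) / α) * α ^ (1 / α) * t ^ (((k : ℝ) + 1) / α) := by
    rw [← pow_succ', hT, ← rpow_natCast, ← rpow_mul (by positivity), mul_rpow hα0.le ht.le,
      ← rpow_add hα0]
    push_cast
    ring_nf
  have hα1 : α ^ (1 / α) * α ^ ((α - 1) / α) = α := by
    rw [← rpow_add hα0, ← add_div, add_sub_cancel, div_self hα0.ne', rpow_one]
  have hscale (k : ℕ) :
      1 / T * (1 / (π * α ^ ((α - 1) / α))) * (α ^ ((k : ℝ) / α) / T ^ k) =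
        t ^ (-((k : ℝ) + 1) / α) / (π * α) := by
    have : 0 < α ^ ((k : ℝ) / α) := by positivity
    calc 1 / T * (1 / (π * α ^ ((α - 1) / α))) * (α ^ ((k : ℝ) / α) / T ^ k)
        = α ^ ((k : ℝ) / α) / (π * (α ^ ((α - 1) / α) * (T * T ^ k))) := by field_simp
      _ = α ^ ((k : ℝ) / α) / (π * (α ^ ((k : ℝ) / α) * (α ^ (1 / α) * α ^ ((α - 1) / α)) *
            t ^ (((k : ℝ) + 1) / α))) := by
          rw [hTpow]
          ring_nf
      _ = _ := by
          rw [hα1, neg_div, rpow_neg ht.le]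
          field_simp
  unfold genAiry
  rw [← mul_assoc]
  refine (hsum.hasSum.mul_left _).congr_fun fun k => ?_
  rw [scaledAiryCoeff, ← hscale k, div_pow]
  ring

theorem hasSum_sin_mul_asymmetric_exp (p θ a : ℝ) :
    HasSum (fun k : ℕ => (p * sin (k * (π / 2 - θ)) + (1 - p) * sin (k * (π / 2 + θ))) *
        a ^ k / k !)
      (sin (a * cos θ) * (p * exp (a * sin θ) + (1 - p) * exp (-(a * sin θ)))) := by
  have hneg : HasSum (fun k : ℕ => a ^ k / k ! * sin (k * (π / 2 + θ)))
      (sin (a * cos θ) * exp (-(a * sin θ))) := by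
    simpa only [cos_neg, sin_neg, mul_neg, sub_neg_eq_add] using
      hasSum_sin_mul_cos_mul_exp_mul_sin a (-θ)
  rw [mul_add, mul_left_comm _ p, mul_left_comm _ (1 - p)]
  exact (((hasSum_sin_mul_cos_mul_exp_mul_sin a θ).mul_left p).add
    (hneg.mul_left (1 - p))).congr_fun fun k => by ring

theorem abs_mul_sin_add_mul_sin_le (p u v : ℝ) :
    |p * sin u + (1 - p) * sin v| ≤ |p| + |1 - p| := by
  refine (abs_add_le _ _).trans (add_le_add ?_ ?_) <;>
    rw [abs_mul] <;> exact mul_le_of_le_one_right (abs_nonneg _) (abs_sin_le_one _)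

theorem asymmetricFresnel_integral_repr_general (α t p x : ℝ) (hα : 1 < α) (ht : 0 < t)
    (hx : x ≠ 0) :
    (1 / (α * t) ^ (1 / α)) *
        (p * genAiry α (-(x / (α * t) ^ (1 / α))) +
          (1 - p) * genAiry α (x / (α * t) ^ (1 / α))) =
      (α * t / (π * x)) *
        ∫ y in Ioi (0 : ℝ), Real.exp (-t * y ^ α) * y ^ (α - 1) *
          Real.sin (x * y * Real.cos (π / (2 * α))) *
          (p * Real.exp (x * y * Real.sin (π / (2 * α))) +
            (1 - p) * Real.exp (-(x * y * Real.sin (π / (2 * α))))) := by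
  have hα0 : 0 < α := by linarith
  set θ := π / (2 * α)
  set s : ℕ → ℝ := fun k => p * sin (k * (π / 2 - θ)) + (1 - p) * sin (k * (π / 2 + θ))
  have hL := ((hasSum_genAiry_div hα ht (-x)).mul_left p).add
    ((hasSum_genAiry_div hα ht x).mul_left (1 - p))
  have hR : HasSum (fun k => s k * x ^ k / k ! * stretchedExpMoment α t k)
      (∫ y in Ioi (0 : ℝ), exp (-t * y ^ α) * y ^ (α - 1) * sin (x * y * cos θ) *
        (p * exp (x * y * sin θ) + (1 - p) * exp (-(x * y * sin θ)))) := by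
    simpa only [mul_assoc] using hasSum_integral_exp_neg_mul_rpow_mul hα ht
      (c := fun k => s k * x ^ k) (B := |p| + |1 - p|) (C := |x|)
      (fun k => by
        rw [abs_mul, abs_pow]
        exact mul_le_mul_of_nonneg_right (abs_mul_sin_add_mul_sin_le _ _ _) (by positivity))
      (fun y => (hasSum_sin_mul_asymmetric_exp p θ (x * y)).congr_fun fun k => by ring)
  have hR' := (hasSum_nat_add_iff' 1).2 (hR.mul_left (α * t / (π * x)))
  simp only [Finset.range_one, Finset.sum_singleton, s, CharP.cast_eq_zero, zero_mul, sin_zero,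
    mul_zero, add_zero, zero_div, sub_zero] at hR'
  rw [neg_div] at hL
  refine .trans (by ring) (hL.unique (hR'.congr_fun fun j => ?_))
  have hθ : ((j : ℝ) + 1) * (π / 2 + θ) = π * (j + 1) * (α + 1) / (2 * α) := by
    simp only [θ]
    field_simp
  rw [scaledAiryCoeff, stretchedExpMoment_succ hα0 ht, Nat.cast_succ,
    sin_succ_mul_pi_div_two_sub, hθ, Nat.factorial_succ, neg_pow, pow_succ]
  push_cast
  field_simp

/-- For `α > 1`, `t > 0`, `p ∈ [0,1]` and `x ≠ 0`, the
asymmetric Fresnel pseudo-density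
`u_{2α,p}(x,t) = (1/(αt)^{1/α}) [ p·Ai_α(−x/(αt)^{1/α}) + (1−p)·Ai_α(x/(αt)^{1/α}) ]`
admits the integral representation
`u_{2α,p}(x,t) = (α t/(π x)) ∫_0^∞ e^{-t y^α} y^{α-1} sin(x y cos(π/(2α)))
  ( p e^{x y sin(π/(2α))} + (1−p) e^{−x y sin(π/(2α))} ) dy`. -/
theorem asymmetricFresnel_integral_repr (α t p x : ℝ) (hα : 1 < α) (ht : 0 < t)
    (hp0 : 0 ≤ p) (hp1 : p ≤ 1) (hx : x ≠ 0) :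
    (1 / (α * t) ^ (1 / α)) *
        (p * genAiry α (-(x / (α * t) ^ (1 / α))) +
          (1 - p) * genAiry α (x / (α * t) ^ (1 / α))) =
      (α * t / (π * x)) *
        ∫ y in Ioi (0 : ℝ), Real.exp (-t * y ^ α) * y ^ (α - 1) *
          Real.sin (x * y * Real.cos (π / (2 * α))) *
          (p * Real.exp (x * y * Real.sin (π / (2 * α))) +
            (1 - p) * Real.exp (-(x * y * Real.sin (π / (2 * α))))) :=
  asymmetricFresnel_integral_repr_general α t p x hα ht hx
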